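/- arXiv:2006.09734 — 2 statements merged into one kernel-verified Lean document; each statement's English description precedes it below -/
import Mathlib

section
/- Let G: ℝⁿ → ℝᵐ be continuously differentiable, let K := D₁ ∪ … ∪ D_p ⊆ ℝᵐ be the union of finitely many convex polyhedral sets, and let x̄ ∈ ℝⁿ satisfy G(x̄) ∈ K. Define Φ(x) := G(x) − K, 𝓜(x,y) := ⋃_{λ∈ℝᵐ} D*Φ(x,y)(λ), and 𝒦(x) := {G'(x)ᵀλ | λ ∈ N_K(G(x̄))}. Then x̄ is AM-regular, i.e., Limsup_{x→x̄, y→0} 𝓜(x,y) ⊆ 𝓜(x̄,0), if and only if Limsup_{x→x̄} 𝒦(x) ⊆ 𝒦(x̄). -/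
open Filter Topology RealInnerProductSpace
open scoped ENNReal NNReal

noncomputable section

/-- Fréchet (regular) normal cone to `A` at `x`. -/
def frechetNC {E : Type*} [NormedAddCommGroup E] [InnerProductSpace ℝ E]
    (A : Set E) (x : E) : Set E :=
  {v | x ∈ A ∧ ∀ ε > 0, ∃ δ > 0, ∀ y ∈ A, ‖y - x‖ < δ → ⟪v, y - x⟫ ≤ ε * ‖y - x‖}

/-- Limiting (Mordukhovich) normal cone to `A` at `x`. -/
def limitingNC {E : Type*} [NormedAddCommGroup E] [InnerProductSpace ℝ E]
    (A : Set E) (x : E) : Set E :=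
  {v | ∃ xk vk : ℕ → E, (∀ k, xk k ∈ A) ∧ Tendsto xk atTop (𝓝 x) ∧
    (∀ k, vk k ∈ frechetNC A (xk k)) ∧ Tendsto vk atTop (𝓝 v)}

section SV
variable {E F : Type*} [NormedAddCommGroup E] [InnerProductSpace ℝ E]
  [NormedAddCommGroup F] [InnerProductSpace ℝ F]

/-- Pack a pair into the `ℓ²` product space. -/
def pl2 (x : E) (y : F) : WithLp 2 (E × F) := (WithLp.equiv 2 (E × F)).symm (x, y)

/-- Graph of a set-valued map, as a subset of the `ℓ²` product space. -/
def svGraph (Φ : E → Set F) : Set (WithLp 2 (E × F)) :=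
  {p | (WithLp.equiv 2 (E × F) p).2 ∈ Φ (WithLp.equiv 2 (E × F) p).1}

/-- Limiting coderivative `D*Φ(x,y)(ys)`. -/
def coderiv (Φ : E → Set F) (x : E) (y : F) (ys : F) : Set E :=
  {xs | pl2 xs (-ys) ∈ limitingNC (svGraph Φ) (pl2 x y)}

/-- Limiting subdifferential of a real-valued function. -/
def limSubdiff (f : E → ℝ) (x : E) : Set E :=
  {v | pl2 v (-1 : ℝ) ∈ limitingNC
    {p : WithLp 2 (E × ℝ) | f (WithLp.equiv 2 (E × ℝ) p).1 ≤ (WithLp.equiv 2 (E × ℝ) p).2}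
    (pl2 x (f x))}

/-- The multiplier-union map `𝓜(x,y) = ⋃_λ D*Φ(x,y)(λ)`. -/
def Mmap (Φ : E → Set F) (x : E) (y : F) : Set E := ⋃ l : F, coderiv Φ x y l

/-- Outer limit `Limsup_{x→x̄,y→0} 𝓜(x,y)`. -/
def MmapLimsup (Φ : E → Set F) (xb : E) : Set E :=
  {xs | ∃ (xk xsk : ℕ → E) (yk : ℕ → F), Tendsto xk atTop (𝓝 xb) ∧
    Tendsto yk atTop (𝓝 0) ∧ Tendsto xsk atTop (𝓝 xs) ∧
    ∀ k, xsk k ∈ Mmap Φ (xk k) (yk k)}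

/-- AM-regularity. -/
def AMregular (Φ : E → Set F) (xb : E) : Prop := MmapLimsup Φ xb ⊆ Mmap Φ xb 0
end SV

section NormOnly
variable {E F : Type*} [NormedAddCommGroup E] [NormedAddCommGroup F]

/-- Generalized distance function `ρ_Γ`, with value `+∞` when `Γ x = ∅`. -/
def rhoD (Γ : E → Set F) (x : E) (y : F) : ℝ≥0∞ := ⨅ z ∈ Γ x, (‖y - z‖₊ : ℝ≥0∞)

/-- Set of projections `Π(y, Γ x)`. -/
def projSet (Γ : E → Set F) (x : E) (y : F) : Set F :=
  {z | z ∈ Γ x ∧ (‖y - z‖₊ : ℝ≥0∞) = rhoD Γ x y}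

/-- Aubin property of `Φ` at `(xb, yb) ∈ gph Φ`. -/
def AubinAt (Φ : E → Set F) (xb : E) (yb : F) : Prop :=
  ∃ U ∈ 𝓝 xb, ∃ V ∈ 𝓝 yb, ∃ κ : ℝ, 0 < κ ∧
    ∀ x ∈ U, ∀ x' ∈ U, ∀ z ∈ Φ x ∩ V, ∃ w ∈ Φ x', ‖z - w‖ ≤ κ * ‖x - x'‖
end NormOnly


/-- A convex polyhedral set: an intersection of finitely many closed half-spaces. -/
def IsPolyhedralSet {E : Type*} [NormedAddCommGroup E] [InnerProductSpace ℝ E]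
    (S : Set E) : Prop :=
  ∃ (k : ℕ) (a : Fin k → E) (b : Fin k → ℝ), S = {z | ∀ i, ⟪a i, z⟫ ≤ b i}



section Lemmas
variable {E : Type*} [NormedAddCommGroup E] [InnerProductSpace ℝ E]

theorem frechetNC_congr {A A' : Set E} {x : E} {r : ℝ} (hr : 0 < r)
    (h : A ∩ Metric.ball x r = A' ∩ Metric.ball x r) :
    frechetNC A x ⊆ frechetNC A' x := by
  rintro v ⟨hxA, hv⟩
  have hx : x ∈ A' := by
    have : x ∈ A ∩ Metric.ball x r := ⟨hxA, Metric.mem_ball_self hr⟩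
    rw [h] at this; exact this.1
  refine ⟨hx, fun ε hε => ?_⟩
  obtain ⟨δ, hδ, hd⟩ := hv ε hε
  refine ⟨min δ r, lt_min hδ hr, fun y hy hny => ?_⟩
  have hyA : y ∈ A := by
    have : y ∈ A' ∩ Metric.ball x r := ⟨hy, by
      rw [Metric.mem_ball, dist_eq_norm]; exact lt_of_lt_of_le hny (min_le_right _ _)⟩
    rw [← h] at this; exact this.1
  exact hd y hyA (lt_of_lt_of_le hny (min_le_left _ _))

theorem frechetNC_congr_eq {A A' : Set E} {x : E} {r : ℝ} (hr : 0 < r)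
    (h : A ∩ Metric.ball x r = A' ∩ Metric.ball x r) :
    frechetNC A x = frechetNC A' x :=
  le_antisymm (frechetNC_congr hr h) (frechetNC_congr hr h.symm)

theorem limitingNC_congr {A A' : Set E} {c : E} {R : ℝ}
    (h : A ∩ Metric.ball c R = A' ∩ Metric.ball c R) {x : E} (hx : x ∈ Metric.ball c R) :
    limitingNC A x ⊆ limitingNC A' x := by
  rintro v ⟨xk, vk, hmem, hxk, hvk, hv⟩
  have hev : ∀ᶠ k in atTop, xk k ∈ Metric.ball c R :=
    hxk.eventually (Metric.isOpen_ball.mem_nhds hx)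
  obtain ⟨N, hN⟩ := eventually_atTop.1 hev
  refine ⟨fun k => xk (k + N), fun k => vk (k + N), fun k => ?_, ?_, fun k => ?_, ?_⟩
  · have hb := hN (k + N) (Nat.le_add_left _ _)
    have : xk (k + N) ∈ A ∩ Metric.ball c R := ⟨hmem _, hb⟩
    rw [h] at this; exact this.1
  · exact hxk.comp (tendsto_add_atTop_nat N)
  · have hb := hN (k + N) (Nat.le_add_left _ _)
    have hr : (0:ℝ) < R - dist (xk (k+N)) c := by
      rw [Metric.mem_ball] at hb; linarith
    have hsub : Metric.ball (xk (k+N)) (R - dist (xk (k+N)) c) ⊆ Metric.ball c R := by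
      intro z hz
      rw [Metric.mem_ball] at hz ⊢
      calc dist z c ≤ dist z (xk (k+N)) + dist (xk (k+N)) c := dist_triangle _ _ _
        _ < R := by linarith
    have hloc : A ∩ Metric.ball (xk (k+N)) (R - dist (xk (k+N)) c)
        = A' ∩ Metric.ball (xk (k+N)) (R - dist (xk (k+N)) c) := by
      ext z
      constructor
      · rintro ⟨hz, hzb⟩
        have : z ∈ A' ∩ Metric.ball c R := by rw [← h]; exact ⟨hz, hsub hzb⟩
        exact ⟨this.1, hzb⟩
      · rintro ⟨hz, hzb⟩
        have : z ∈ A ∩ Metric.ball c R := by rw [h]; exact ⟨hz, hsub hzb⟩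
        exact ⟨this.1, hzb⟩
    exact frechetNC_congr hr hloc (hvk (k + N))
  · exact hv.comp (tendsto_add_atTop_nat N)

theorem limitingNC_congr_eq {A A' : Set E} {c : E} {R : ℝ}
    (h : A ∩ Metric.ball c R = A' ∩ Metric.ball c R) {x : E} (hx : x ∈ Metric.ball c R) :
    limitingNC A x = limitingNC A' x :=
  le_antisymm (limitingNC_congr h hx) (limitingNC_congr h.symm hx)

theorem frechetNC_translate {A : Set E} {x : E} (c : E) :
    frechetNC ((c + ·) '' A) (c + x) = frechetNC A x := by
  ext v
  constructor
  · rintro ⟨hx, hv⟩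
    obtain ⟨x', hx', hxe⟩ := hx
    have hxx : x' = x := by
      have := hxe; apply add_left_cancel (a := c); exact this
    subst hxx
    refine ⟨hx', fun ε hε => ?_⟩
    obtain ⟨δ, hδ, hd⟩ := hv ε hε
    refine ⟨δ, hδ, fun y hy hny => ?_⟩
    have := hd (c + y) ⟨y, hy, rfl⟩ (by simpa [add_sub_add_left_eq_sub] using hny)
    simpa [add_sub_add_left_eq_sub] using this
  · rintro ⟨hx, hv⟩
    refine ⟨⟨x, hx, rfl⟩, fun ε hε => ?_⟩
    obtain ⟨δ, hδ, hd⟩ := hv ε hε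
    refine ⟨δ, hδ, fun y hy hny => ?_⟩
    obtain ⟨y', hy', rfl⟩ := hy
    have h1 : c + y' - (c + x) = y' - x := add_sub_add_left_eq_sub y' x c
    rw [h1] at hny ⊢
    exact hd y' hy' hny

theorem limitingNC_translate {A : Set E} {x : E} (c : E) :
    limitingNC ((c + ·) '' A) (c + x) = limitingNC A x := by
  ext v
  constructor
  · rintro ⟨xk, vk, hmem, hxk, hvk, hv⟩
    refine ⟨fun k => xk k - c, vk, fun k => ?_, ?_, fun k => ?_, hv⟩
    · obtain ⟨z, hz, hze⟩ := hmem k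
      have : xk k - c = z := by simp only [← hze]; abel
      show xk k - c ∈ A
      rw [this]; exact hz
    · have : Tendsto (fun k => xk k - c) atTop (𝓝 (c + x - c)) := hxk.sub_const c
      simpa using this
    · have h1 : c + (xk k - c) = xk k := by abel
      have := hvk k
      rw [← h1] at this
      rw [← frechetNC_translate c]
      exact this
  · rintro ⟨xk, vk, hmem, hxk, hvk, hv⟩
    refine ⟨fun k => c + xk k, vk, fun k => ⟨xk k, hmem k, rfl⟩, ?_, fun k => ?_, hv⟩
    · exact hxk.const_add c
    · rw [frechetNC_translate c]; exact hvk k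

theorem frechetNC_cone_smul {C : Set E} (hC : ∀ t : ℝ, 0 < t → ∀ z ∈ C, t • z ∈ C)
    {w : E} {t : ℝ} (ht : 0 < t) : frechetNC C w ⊆ frechetNC C (t • w) := by
  rintro v ⟨hw, hv⟩
  refine ⟨hC t ht w hw, fun ε hε => ?_⟩
  obtain ⟨δ, hδ, hd⟩ := hv ε hε
  refine ⟨t * δ, by positivity, fun y hy hny => ?_⟩
  have hy' : t⁻¹ • y ∈ C := hC t⁻¹ (by positivity) y hy
  have hkey : t⁻¹ • y - w = t⁻¹ • (y - t • w) := by
    rw [smul_sub, smul_smul, inv_mul_cancel₀ ht.ne', one_smul]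
  have hnorm : ‖t⁻¹ • y - w‖ = t⁻¹ * ‖y - t • w‖ := by
    rw [hkey, norm_smul, Real.norm_eq_abs, abs_of_pos (by positivity)]
  have hlt : ‖t⁻¹ • y - w‖ < δ := by
    rw [hnorm]
    calc t⁻¹ * ‖y - t • w‖ < t⁻¹ * (t * δ) := by
          apply mul_lt_mul_of_pos_left hny (by positivity)
      _ = δ := by field_simp
  have hle := hd _ hy' hlt
  rw [hnorm] at hle
  have h2 : ⟪v, y - t • w⟫ = t * ⟪v, t⁻¹ • y - w⟫ := by
    rw [hkey, real_inner_smul_right]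
    field_simp
  rw [h2]
  calc t * ⟪v, t⁻¹ • y - w⟫ ≤ t * (ε * (t⁻¹ * ‖y - t • w‖)) := by
        apply mul_le_mul_of_nonneg_left hle ht.le
    _ = ε * ‖y - t • w‖ := by field_simp

theorem limitingNC_cone {C : Set E} (hC : ∀ t : ℝ, 0 < t → ∀ z ∈ C, t • z ∈ C)
    (w : E) : limitingNC C w ⊆ limitingNC C 0 := by
  rintro v ⟨xk, vk, hmem, hxk, hvk, hv⟩
  set t : ℕ → ℝ := fun k => ((k+1 : ℝ))⁻¹ * (1 + ‖xk k‖)⁻¹ with ht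
  have htpos : ∀ k, 0 < t k := fun k => by positivity
  refine ⟨fun k => t k • xk k, vk, fun k => hC _ (htpos k) _ (hmem k), ?_, fun k => ?_, hv⟩
  · rw [show (0:E) = 0 by rfl]
    have hbound : ∀ k, ‖t k • xk k‖ ≤ ((k+1:ℝ))⁻¹ := by
      intro k
      rw [norm_smul, Real.norm_eq_abs, abs_of_pos (htpos k), ht]
      calc (k+1:ℝ)⁻¹ * (1 + ‖xk k‖)⁻¹ * ‖xk k‖
          ≤ (k+1:ℝ)⁻¹ * 1 := by
            rw [mul_assoc]
            apply mul_le_mul_of_nonneg_left _ (by positivity)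
            rw [inv_mul_le_iff₀ (by positivity)]
            linarith
        _ = (k+1:ℝ)⁻¹ := mul_one _
    have : Tendsto (fun k : ℕ => ((k+1:ℝ))⁻¹) atTop (𝓝 0) := by
      exact tendsto_one_div_add_atTop_nhds_zero_nat.congr (fun k => by rw [one_div])
    apply squeeze_zero_norm hbound this
  · exact frechetNC_cone_smul hC (htpos k) (hvk k)

end Lemmas

section Poly
variable {F : Type*} [NormedAddCommGroup F] [InnerProductSpace ℝ F]

theorem poly_localize {p : ℕ} {D : Fin p → Set F} (hD : ∀ i, IsPolyhedralSet (D i))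
    {K : Set F} (hK : K = ⋃ i, D i) {ub : F} (hub : ub ∈ K) :
    ∃ ε > 0, ∀ u, dist u ub < ε → limitingNC K u ⊆ limitingNC K ub := by
  choose kk aa bb hrep using hD
  have hne : Nonempty (Fin p) := by
    rw [hK, Set.mem_iUnion] at hub; exact ⟨hub.choose⟩
  -- the local cone
  set C : Set F := ⋃ i, {z | ub ∈ D i ∧ ∀ j, ⟪aa i j, ub⟫ = bb i j → ⟪aa i j, z⟫ ≤ 0} with hCdef
  have hC : ∀ t : ℝ, 0 < t → ∀ z ∈ C, t • z ∈ C := by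
    intro t ht z hz
    rw [hCdef, Set.mem_iUnion] at hz ⊢
    obtain ⟨i, hiu, hiz⟩ := hz
    refine ⟨i, hiu, fun j hj => ?_⟩
    rw [real_inner_smul_right]
    have := hiz j hj
    nlinarith
  have himg : (ub + ·) '' C = {u | u - ub ∈ C} := by
    ext u
    constructor
    · rintro ⟨z, hz, rfl⟩; simpa using hz
    · intro hu; exact ⟨u - ub, hu, by show ub + (u - ub) = u; abel⟩
  -- choose per-index epsilons
  have hclosed : ∀ i, IsClosed (D i) := by
    intro i
    rw [hrep i]
    have : {z : F | ∀ j, ⟪aa i j, z⟫ ≤ bb i j} = ⋂ j, {z : F | ⟪aa i j, z⟫ ≤ bb i j} := by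
      ext z; simp [Set.mem_iInter]
    rw [this]
    exact isClosed_iInter fun j =>
      isClosed_le (continuous_const.inner continuous_id) continuous_const
  have heps : ∀ i : Fin p, ∃ ε > 0,
      (ub ∉ D i → Metric.ball ub ε ∩ D i = ∅) ∧
      (ub ∈ D i → ∀ z : F, ‖z‖ < ε → ∀ j, ⟪aa i j, ub⟫ ≠ bb i j → ⟪aa i j, ub + z⟫ < bb i j) := by
    intro i
    by_cases hui : ub ∈ D i
    · set U : Set F := ⋂ j, {z : F | ⟪aa i j, ub⟫ = bb i j ∨ ⟪aa i j, ub + z⟫ < bb i j} with hU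
      have hUopen : IsOpen U := by
        apply isOpen_iInter_of_finite
        intro j
        by_cases hj : ⟪aa i j, ub⟫ = bb i j
        · have : {z : F | ⟪aa i j, ub⟫ = bb i j ∨ ⟪aa i j, ub + z⟫ < bb i j} = Set.univ := by
            ext z; simp [hj]
          rw [this]; exact isOpen_univ
        · have : {z : F | ⟪aa i j, ub⟫ = bb i j ∨ ⟪aa i j, ub + z⟫ < bb i j}
              = {z : F | ⟪aa i j, ub + z⟫ < bb i j} := by
            ext z; simp [hj]
          rw [this]
          exact isOpen_lt (continuous_const.inner (continuous_const.add continuous_id)) continuous_const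
      have h0U : (0 : F) ∈ U := by
        rw [hU, Set.mem_iInter]
        intro j
        by_cases hj : ⟪aa i j, ub⟫ = bb i j
        · exact Or.inl hj
        · refine Or.inr ?_
          have hle : ⟪aa i j, ub⟫ ≤ bb i j := by
            have := (hrep i) ▸ hui; exact this j
          simpa using lt_of_le_of_ne hle hj
      obtain ⟨ε, hε, hball⟩ := Metric.isOpen_iff.1 hUopen 0 h0U
      refine ⟨ε, hε, fun h => absurd hui h, fun _ z hz j hj => ?_⟩
      have hzU : z ∈ U := hball (by simpa [dist_eq_norm] using hz)
      rw [hU, Set.mem_iInter] at hzU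
      rcases hzU j with h | h
      · exact absurd h hj
      · exact h
    · have : ub ∈ (D i)ᶜ := hui
      obtain ⟨ε, hε, hball⟩ := Metric.isOpen_iff.1 (hclosed i).isOpen_compl ub this
      refine ⟨ε, hε, fun _ => ?_, fun h => absurd h hui⟩
      ext z; simp only [Set.mem_inter_iff, Set.mem_empty_iff_false, iff_false, not_and]
      intro hzb hzD
      exact hball hzb hzD
  choose εf hεf0 hεf1 hεf2 using heps
  set ε0 : ℝ := Finset.univ.inf' (Finset.univ_nonempty) εf with hε0def
  have hε0pos : 0 < ε0 := by
    rw [hε0def, Finset.lt_inf'_iff]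
    exact fun i _ => hεf0 i
  have hε0le : ∀ i, ε0 ≤ εf i := fun i => Finset.inf'_le _ (Finset.mem_univ i)
  -- the localization identity
  have hloc : K ∩ Metric.ball ub ε0 = ((ub + ·) '' C) ∩ Metric.ball ub ε0 := by
    rw [himg]
    ext u
    simp only [Set.mem_inter_iff, Set.mem_setOf_eq, and_congr_left_iff]
    intro hub'
    constructor
    · intro huK
      rw [hK, Set.mem_iUnion] at huK
      obtain ⟨i, hi⟩ := huK
      by_cases hui : ub ∈ D i
      · rw [hCdef, Set.mem_iUnion]
        refine ⟨i, hui, fun j hj => ?_⟩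
        have h1 : ⟪aa i j, u⟫ ≤ bb i j := ((hrep i) ▸ hi) j
        have h2 : ⟪aa i j, ub⟫ = bb i j := hj
        have : ⟪aa i j, u - ub⟫ = ⟪aa i j, u⟫ - ⟪aa i j, ub⟫ := inner_sub_right _ _ _
        rw [this, h2]; linarith
      · exfalso
        have : u ∈ Metric.ball ub (εf i) ∩ D i :=
          ⟨Metric.mem_ball.2 (lt_of_lt_of_le (Metric.mem_ball.1 hub') (hε0le i)), hi⟩
        rw [hεf1 i hui] at this
        exact this
    · intro huC
      rw [hCdef, Set.mem_iUnion] at huC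
      obtain ⟨i, hui, hiz⟩ := huC
      rw [hK, Set.mem_iUnion]
      refine ⟨i, ?_⟩
      rw [hrep i]
      intro j
      by_cases hj : ⟪aa i j, ub⟫ = bb i j
      · have h1 := hiz j hj
        have : ⟪aa i j, u⟫ = ⟪aa i j, ub⟫ + ⟪aa i j, u - ub⟫ := by
          rw [← inner_add_right]; congr 1; abel
        rw [this, hj]; linarith
      · have hznorm : ‖u - ub‖ < εf i := by
          rw [← dist_eq_norm]
          exact lt_of_lt_of_le (Metric.mem_ball.1 hub') (hε0le i)
        have := hεf2 i hui (u - ub) hznorm j hj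
        have heq : ub + (u - ub) = u := by abel
        rw [heq] at this
        linarith
  refine ⟨ε0, hε0pos, fun u hu => ?_⟩
  have hu' : u ∈ Metric.ball ub ε0 := Metric.mem_ball.2 hu
  have hub'' : ub ∈ Metric.ball ub ε0 := Metric.mem_ball_self hε0pos
  calc limitingNC K u = limitingNC ((ub + ·) '' C) u := limitingNC_congr_eq hloc hu'
    _ = limitingNC ((ub + ·) '' C) (ub + (u - ub)) := by rw [show ub + (u - ub) = u by abel]
    _ = limitingNC C (u - ub) := limitingNC_translate ub
    _ ⊆ limitingNC C 0 := limitingNC_cone hC _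
    _ = limitingNC ((ub + ·) '' C) (ub + 0) := (limitingNC_translate ub).symm
    _ = limitingNC ((ub + ·) '' C) ub := by rw [add_zero]
    _ = limitingNC K ub := (limitingNC_congr_eq hloc hub'').symm

end Poly

section Prod2
variable {E F : Type*} [NormedAddCommGroup E] [InnerProductSpace ℝ E]
  [NormedAddCommGroup F] [InnerProductSpace ℝ F]

theorem norm_pl2_sq (p : WithLp 2 (E × F)) : ‖p‖^2 = ‖p.fst‖^2 + ‖p.snd‖^2 := by
  rw [← real_inner_self_eq_norm_sq, ← real_inner_self_eq_norm_sq,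
    ← real_inner_self_eq_norm_sq, WithLp.prod_inner_apply]
  simp only [WithLp.ofLp_fst, WithLp.ofLp_snd]

theorem pl2_norm_fst_le (p : WithLp 2 (E × F)) : ‖p.fst‖ ≤ ‖p‖ := by
  nlinarith [norm_pl2_sq p, norm_nonneg p, norm_nonneg p.fst, norm_nonneg p.snd, sq_nonneg ‖p.snd‖]

theorem pl2_norm_snd_le (p : WithLp 2 (E × F)) : ‖p.snd‖ ≤ ‖p‖ := by
  nlinarith [norm_pl2_sq p, norm_nonneg p, norm_nonneg p.fst, norm_nonneg p.snd, sq_nonneg ‖p.fst‖]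

theorem norm_pl2_fst (a : E) : ‖pl2 a (0:F)‖ = ‖a‖ := by
  have h := norm_pl2_sq (pl2 a (0:F))
  have h2 : (pl2 a (0:F)).fst = a := rfl
  have h3 : (pl2 a (0:F)).snd = (0:F) := rfl
  rw [h2, h3] at h
  simp only [norm_zero] at h
  nlinarith [norm_nonneg (pl2 a (0:F)), norm_nonneg a]

theorem norm_pl2_snd (b : F) : ‖pl2 (0:E) b‖ = ‖b‖ := by
  have h := norm_pl2_sq (pl2 (0:E) b)
  have h2 : (pl2 (0:E) b).fst = (0:E) := rfl
  have h3 : (pl2 (0:E) b).snd = b := rfl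
  rw [h2, h3] at h
  simp only [norm_zero] at h
  nlinarith [norm_nonneg (pl2 (0:E) b), norm_nonneg b]

theorem continuous_pl2_fst : Continuous fun p : WithLp 2 (E × F) => p.fst :=
  continuous_fst.comp (WithLp.prodContinuousLinearEquiv 2 ℝ E F).continuous

theorem continuous_pl2_snd : Continuous fun p : WithLp 2 (E × F) => p.snd :=
  continuous_snd.comp (WithLp.prodContinuousLinearEquiv 2 ℝ E F).continuous

theorem continuous_pl2 : Continuous fun q : E × F => pl2 q.1 q.2 :=
  (WithLp.prodContinuousLinearEquiv 2 ℝ E F).symm.continuous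

/-- Characterization of the Fréchet normal cone to `{p | p.snd ∈ K}`. -/
theorem frechet_prod {K : Set F} {p w : WithLp 2 (E × F)} :
    w ∈ frechetNC {q : WithLp 2 (E × F) | q.snd ∈ K} p ↔
      w.fst = 0 ∧ w.snd ∈ frechetNC K p.snd := by
  constructor
  · rintro ⟨hp, h⟩
    have hfst : w.fst = 0 := by
      by_contra hne
      have hpos : 0 < ‖w.fst‖ := norm_pos_iff.2 hne
      obtain ⟨δ, hδ, hd⟩ := h (‖w.fst‖/2) (by positivity)
      set t : ℝ := δ / (2 * (‖w.fst‖ + 1)) with htdef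
      have htpos : 0 < t := by positivity
      set y : WithLp 2 (E × F) := pl2 (p.fst + t • w.fst) p.snd with hydef
      have hyS : y ∈ {q : WithLp 2 (E × F) | q.snd ∈ K} := hp
      have hc1 : (y - p).fst = t • w.fst := by
        show (p.fst + t • w.fst) - p.fst = t • w.fst; abel
      have hc2 : (y - p).snd = (0:F) := by show p.snd - p.snd = (0:F); simp
      have hysub : y - p = pl2 (t • w.fst) 0 := by rw [← hc1, ← hc2]; rfl
      have hnorm : ‖y - p‖ = t * ‖w.fst‖ := by
        rw [hysub, norm_pl2_fst, norm_smul, Real.norm_eq_abs, abs_of_pos htpos]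
      have hlt : ‖y - p‖ < δ := by
        rw [hnorm, htdef]
        rw [div_mul_eq_mul_div, div_lt_iff₀ (by positivity)]
        nlinarith
      have := hd y hyS hlt
      have hinner : ⟪w, y - p⟫ = t * ‖w.fst‖^2 := by
        rw [hysub, WithLp.prod_inner_apply]; simp only [WithLp.ofLp_fst, WithLp.ofLp_snd]
        have h1 : (pl2 (t • w.fst) (0:F)).fst = t • w.fst := rfl
        have h2 : (pl2 (t • w.fst) (0:F)).snd = (0:F) := rfl
        rw [h1, h2, inner_zero_right, real_inner_smul_right, real_inner_self_eq_norm_sq]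
        ring
      rw [hinner, hnorm] at this
      nlinarith [mul_pos htpos (pow_pos hpos 2)]
    refine ⟨hfst, hp, fun ε hε => ?_⟩
    obtain ⟨δ, hδ, hd⟩ := h ε hε
    refine ⟨δ, hδ, fun z hz hnz => ?_⟩
    set y : WithLp 2 (E × F) := pl2 p.fst z with hydef
    have hc1 : (y - p).fst = (0:E) := by show p.fst - p.fst = (0:E); simp
    have hc2 : (y - p).snd = z - p.snd := rfl
    have hysub : y - p = pl2 0 (z - p.snd) := by rw [← hc1, ← hc2]; rfl
    have hnorm : ‖y - p‖ = ‖z - p.snd‖ := by rw [hysub, norm_pl2_snd]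
    have := hd y hz (by rw [hnorm]; exact hnz)
    have hinner : ⟪w, y - p⟫ = ⟪w.snd, z - p.snd⟫ := by
      rw [hysub, WithLp.prod_inner_apply]; simp only [WithLp.ofLp_fst, WithLp.ofLp_snd]
      have h1 : (pl2 (0:E) (z - p.snd)).fst = (0:E) := rfl
      have h2 : (pl2 (0:E) (z - p.snd)).snd = z - p.snd := rfl
      rw [h1, h2, inner_zero_right]
      ring
    rw [hinner, hnorm] at this
    exact this
  · rintro ⟨h0, hK, h⟩
    refine ⟨hK, fun ε hε => ?_⟩
    obtain ⟨δ, hδ, hd⟩ := h ε hε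
    refine ⟨δ, hδ, fun y hy hny => ?_⟩
    have hsnd : ‖y.snd - p.snd‖ < δ :=
      lt_of_le_of_lt (pl2_norm_snd_le (y - p)) hny
    have := hd y.snd hy hsnd
    have hinner : ⟪w, y - p⟫ = ⟪w.snd, y.snd - p.snd⟫ := by
      rw [WithLp.prod_inner_apply]; simp only [WithLp.ofLp_fst, WithLp.ofLp_snd]
      have : (y - p).fst = y.fst - p.fst := rfl
      rw [this, h0, inner_zero_left]
      ring_nf
      rfl
    rw [hinner]
    calc ⟪w.snd, y.snd - p.snd⟫ ≤ ε * ‖y.snd - p.snd‖ := this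
      _ ≤ ε * ‖y - p‖ := by
          apply mul_le_mul_of_nonneg_left (pl2_norm_snd_le (y - p)) hε.le

/-- Characterization of the limiting normal cone to `{p | p.snd ∈ K}`. -/
theorem limiting_prod {K : Set F} {p w : WithLp 2 (E × F)} :
    w ∈ limitingNC {q : WithLp 2 (E × F) | q.snd ∈ K} p ↔
      w.fst = 0 ∧ w.snd ∈ limitingNC K p.snd := by
  constructor
  · rintro ⟨pk, wk, hmem, hpk, hwk, hw⟩
    have hch : ∀ k, (wk k).fst = 0 ∧ (wk k).snd ∈ frechetNC K ((pk k).snd) :=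
      fun k => frechet_prod.1 (hwk k)
    constructor
    · have h1 : Tendsto (fun k => (wk k).fst) atTop (𝓝 w.fst) :=
        (continuous_pl2_fst.tendsto w).comp hw
      have h2 : Tendsto (fun k => (wk k).fst) atTop (𝓝 (0:E)) := by
        simp only [fun k => (hch k).1]
        exact tendsto_const_nhds
      exact tendsto_nhds_unique h1 h2
    · refine ⟨fun k => (pk k).snd, fun k => (wk k).snd, fun k => hmem k, ?_,
        fun k => (hch k).2, ?_⟩
      · exact (continuous_pl2_snd.tendsto p).comp hpk
      · exact (continuous_pl2_snd.tendsto w).comp hw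
  · rintro ⟨h0, uk, dk, hmem, huk, hdk, hd⟩
    refine ⟨fun k => pl2 p.fst (uk k), fun k => pl2 0 (dk k), fun k => hmem k, ?_,
      fun k => ?_, ?_⟩
    · have : Tendsto (fun k => ((p.fst : E), uk k)) atTop (𝓝 (p.fst, p.snd)) :=
        tendsto_const_nhds.prodMk_nhds huk
      exact (continuous_pl2.tendsto _).comp this
    · apply frechet_prod.2
      exact ⟨rfl, hdk k⟩
    · have : Tendsto (fun k => ((0 : E), dk k)) atTop (𝓝 ((0:E), w.snd)) :=
        tendsto_const_nhds.prodMk_nhds hd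
      have h2 := (continuous_pl2.tendsto _).comp this
      have h3 : pl2 (0:E) w.snd = w := by
        rw [← h0]; rfl
      rw [h3] at h2
      exact h2

end Prod2

section Pullback
variable {E2 : Type*} [NormedAddCommGroup E2] [InnerProductSpace ℝ E2]

theorem frechet_pullback {A B : Set E2} {h : E2 → E2} {z : E2} (hz : z ∈ A)
    (hmap : ∀ p ∈ A, h p ∈ B) {H : E2 →L[ℝ] E2} (hd : HasFDerivAt h H z)
    {L : ℝ≥0} {s : Set E2} (hs : s ∈ 𝓝 z) (hLip : LipschitzOnWith L h s)
    {v u : E2} (hu : ∀ q, ⟪u, q⟫ = ⟪v, H q⟫) (hv : v ∈ frechetNC B (h z)) :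
    u ∈ frechetNC A z := by
  refine ⟨hz, fun ε hε => ?_⟩
  obtain ⟨δ₁, hδ₁, hB⟩ := hv.2 (ε / (2 * (L + 1))) (by positivity)
  set c : ℝ := ε / (2 * (‖v‖ + 1)) with hcdef
  have hc : 0 < c := by positivity
  have hlo : ∀ᶠ y in 𝓝 z, ‖h y - h z - H (y - z)‖ ≤ c * ‖y - z‖ :=
    Asymptotics.isLittleO_iff.mp hd.isLittleO hc
  have hball : Metric.ball z (δ₁ / (L + 1)) ∈ 𝓝 z :=
    Metric.ball_mem_nhds z (by positivity)
  obtain ⟨δ, hδpos, hδsub⟩ := Metric.mem_nhds_iff.1 (Filter.inter_mem (Filter.inter_mem hs hball) hlo)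
  refine ⟨δ, hδpos, fun y hy hny => ?_⟩
  have hyb : y ∈ Metric.ball z δ := Metric.mem_ball.2 (by rwa [dist_eq_norm])
  obtain ⟨⟨hys, hyball⟩, hyo⟩ := hδsub hyb
  have hzs : z ∈ s := mem_of_mem_nhds hs
  have hLy : ‖h y - h z‖ ≤ (L : ℝ) * ‖y - z‖ := by
    have := hLip.dist_le_mul y hys z hzs
    rwa [dist_eq_norm, dist_eq_norm] at this
  have hhyB : h y ∈ B := hmap y hy
  have hclose : ‖h y - h z‖ < δ₁ := by
    have h1 : ‖y - z‖ < δ₁ / (L + 1) := by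
      rw [← dist_eq_norm]; exact Metric.mem_ball.1 hyball
    calc ‖h y - h z‖ ≤ (L : ℝ) * ‖y - z‖ := hLy
      _ ≤ (L : ℝ) * (δ₁ / (L + 1)) := by
          apply mul_le_mul_of_nonneg_left h1.le L.coe_nonneg
      _ < δ₁ := by
          rw [← mul_div_assoc, div_lt_iff₀ (by positivity)]
          nlinarith [L.coe_nonneg, hδ₁]
  have hsplit : ⟪u, y - z⟫ = ⟪v, h y - h z⟫ + ⟪v, H (y - z) - (h y - h z)⟫ := by
    rw [hu, ← inner_add_right]
    congr 1
    abel
  rw [hsplit]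
  have t1 : ⟪v, h y - h z⟫ ≤ ε / (2 * (L + 1)) * ‖h y - h z‖ :=
    hB (h y) hhyB hclose
  have t2 : ⟪v, H (y - z) - (h y - h z)⟫ ≤ ‖v‖ * (c * ‖y - z‖) := by
    calc ⟪v, H (y - z) - (h y - h z)⟫ ≤ ‖v‖ * ‖H (y - z) - (h y - h z)‖ :=
          real_inner_le_norm _ _
      _ ≤ ‖v‖ * (c * ‖y - z‖) := by
          apply mul_le_mul_of_nonneg_left _ (norm_nonneg v)
          rw [norm_sub_rev]
          exact hyo
  have t3 : ε / (2 * (L + 1)) * ‖h y - h z‖ ≤ ε / 2 * ‖y - z‖ := by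
    calc ε / (2 * (L + 1)) * ‖h y - h z‖ ≤ ε / (2 * (L + 1)) * ((L:ℝ) * ‖y - z‖) := by
          apply mul_le_mul_of_nonneg_left hLy (by positivity)
      _ ≤ ε / 2 * ‖y - z‖ := by
          rw [div_mul_eq_mul_div, div_mul_eq_mul_div, div_le_div_iff₀ (by positivity) (by norm_num)]
          have := norm_nonneg (y - z)
          nlinarith [L.coe_nonneg]
  have t4 : ‖v‖ * (c * ‖y - z‖) ≤ ε / 2 * ‖y - z‖ := by
    rw [hcdef]
    have := norm_nonneg (y - z)
    have := norm_nonneg v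
    rw [div_mul_eq_mul_div, mul_div_assoc', div_mul_eq_mul_div, div_le_div_iff₀ (by positivity) (by norm_num)]
    nlinarith
  nlinarith [t1, t2, t3, t4]

theorem limiting_pullback {A B : Set E2} {h : E2 → E2}
    (hmapAB : ∀ p ∈ A, h p ∈ B) (hmapBA : ∀ p ∈ B, h p ∈ A)
    (hinv : ∀ p, h (h p) = p) (hC1 : ContDiff ℝ 1 h)
    (T : E2 → E2 →L[ℝ] E2) (hT : ∀ z' v' q, ⟪T z' v', q⟫ = ⟪v', fderiv ℝ h z' q⟫)
    (hTc : Continuous fun zv : E2 × E2 => T zv.1 zv.2)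
    {z v : E2} (hv : v ∈ limitingNC B (h z)) : T z v ∈ limitingNC A z := by
  obtain ⟨wk, vk, hwmem, hwk, hvk, hvt⟩ := hv
  set zk : ℕ → E2 := fun k => h (wk k) with hzkdef
  have hzkA : ∀ k, zk k ∈ A := fun k => hmapBA _ (hwmem k)
  have hzk : Tendsto zk atTop (𝓝 z) := by
    have := (hC1.continuous.tendsto (h z)).comp hwk
    rwa [hinv z] at this
  have huk : ∀ k, T (zk k) (vk k) ∈ frechetNC A (zk k) := by
    intro k
    obtain ⟨L, s, hs, hLip⟩ := (hC1.contDiffAt (x := zk k)).exists_lipschitzOnWith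
    refine frechet_pullback (hzkA k) hmapAB
      ((hC1.differentiable one_ne_zero).differentiableAt.hasFDerivAt) hs hLip
      (fun q => hT (zk k) (vk k) q) ?_
    rw [hzkdef]
    show vk k ∈ frechetNC B (h (h (wk k)))
    rw [hinv]
    exact hvk k
  refine ⟨zk, fun k => T (zk k) (vk k), hzkA, hzk, huk, ?_⟩
  have : Tendsto (fun k => (zk k, vk k)) atTop (𝓝 (z, v)) := hzk.prodMk_nhds hvt
  exact (hTc.tendsto (z, v)).comp this

end Pullback

set_option linter.unusedSectionVars false
section Shear
variable {E F : Type*} [NormedAddCommGroup E] [InnerProductSpace ℝ E]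
  [NormedAddCommGroup F] [InnerProductSpace ℝ F] [CompleteSpace E] [CompleteSpace F]
  (G : E → F)

/-- The shear map `(x, w) ↦ (x, G x - w)`. -/
def sh (p : WithLp 2 (E × F)) : WithLp 2 (E × F) := pl2 p.fst (G p.fst - p.snd)

theorem sh_invol (p : WithLp 2 (E × F)) : sh G (sh G p) = p := by
  show pl2 p.fst (G p.fst - (G p.fst - p.snd)) = p
  rw [sub_sub_cancel]
  rfl

theorem sh_contDiff (hG : ContDiff ℝ 1 G) : ContDiff ℝ 1 (sh G) := by
  have h1 : ContDiff ℝ 1 (fun q : E × F => (q.1, G q.1 - q.2)) :=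
    contDiff_fst.prodMk ((hG.comp contDiff_fst).sub contDiff_snd)
  exact ((WithLp.prodContinuousLinearEquiv 2 ℝ E F).symm.contDiff.comp h1).comp
    (WithLp.prodContinuousLinearEquiv 2 ℝ E F).contDiff

theorem sh_hasFDerivAt (hG : ContDiff ℝ 1 G) (z : WithLp 2 (E × F)) :
    HasFDerivAt (sh G)
      (((WithLp.prodContinuousLinearEquiv 2 ℝ E F).symm :
          (E × F) →L[ℝ] WithLp 2 (E × F)).comp
        (((ContinuousLinearMap.fst ℝ E F).prod
          ((fderiv ℝ G z.fst).comp (ContinuousLinearMap.fst ℝ E F)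
            - ContinuousLinearMap.snd ℝ E F)).comp
          ((WithLp.prodContinuousLinearEquiv 2 ℝ E F) :
            WithLp 2 (E × F) →L[ℝ] (E × F)))) z := by
  have hg : HasFDerivAt (fun q : E × F => (q.1, G q.1 - q.2))
      ((ContinuousLinearMap.fst ℝ E F).prod
        ((fderiv ℝ G z.fst).comp (ContinuousLinearMap.fst ℝ E F)
          - ContinuousLinearMap.snd ℝ E F))
      ((WithLp.prodContinuousLinearEquiv 2 ℝ E F) z) := by
    apply HasFDerivAt.prodMk
    · exact hasFDerivAt_fst
    · exact (((hG.differentiable one_ne_zero).differentiableAt.hasFDerivAt).comp _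
        hasFDerivAt_fst).sub hasFDerivAt_snd
  have he1 := (WithLp.prodContinuousLinearEquiv 2 ℝ E F).hasFDerivAt (x := z)
  have hcomp1 := HasFDerivAt.comp z hg he1
  have he2 := (WithLp.prodContinuousLinearEquiv 2 ℝ E F).symm.hasFDerivAt
    (x := (fun q : E × F => (q.1, G q.1 - q.2))
      ((WithLp.prodContinuousLinearEquiv 2 ℝ E F) z))
  exact (HasFDerivAt.comp z he2 hcomp1 : _)

/-- The "adjoint shear" `T z (a, b) = (a + (G'(z₁))ᵀ b, -b)`. -/
def shT (z : WithLp 2 (E × F)) : WithLp 2 (E × F) →L[ℝ] WithLp 2 (E × F) :=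
  (((WithLp.prodContinuousLinearEquiv 2 ℝ E F).symm :
      (E × F) →L[ℝ] WithLp 2 (E × F)).comp
    (((ContinuousLinearMap.fst ℝ E F
        + (ContinuousLinearMap.adjoint (fderiv ℝ G z.fst)).comp
            (ContinuousLinearMap.snd ℝ E F)).prod
      (-ContinuousLinearMap.snd ℝ E F)).comp
      ((WithLp.prodContinuousLinearEquiv 2 ℝ E F) :
        WithLp 2 (E × F) →L[ℝ] (E × F))))

theorem shT_apply (z v : WithLp 2 (E × F)) :
    shT G z v = pl2 (v.fst + ContinuousLinearMap.adjoint (fderiv ℝ G z.fst) v.snd)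
      (-v.snd) := rfl

theorem shT_adjoint (hG : ContDiff ℝ 1 G) (z v q : WithLp 2 (E × F)) :
    ⟪shT G z v, q⟫ = ⟪v, fderiv ℝ (sh G) z q⟫ := by
  rw [(sh_hasFDerivAt G hG z).fderiv]
  rw [shT_apply]
  have h1 : (pl2 (v.fst + ContinuousLinearMap.adjoint (fderiv ℝ G z.fst) v.snd)
      (-v.snd) : WithLp 2 (E × F)).fst
      = v.fst + ContinuousLinearMap.adjoint (fderiv ℝ G z.fst) v.snd := rfl
  have h2 : (pl2 (v.fst + ContinuousLinearMap.adjoint (fderiv ℝ G z.fst) v.snd)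
      (-v.snd) : WithLp 2 (E × F)).snd = -v.snd := rfl
  rw [WithLp.prod_inner_apply, WithLp.prod_inner_apply]; simp only [WithLp.ofLp_fst, WithLp.ofLp_snd]; rw [h1, h2]
  have h3 : ((((WithLp.prodContinuousLinearEquiv 2 ℝ E F).symm :
          (E × F) →L[ℝ] WithLp 2 (E × F)).comp
        ((((ContinuousLinearMap.fst ℝ E F).prod
          ((fderiv ℝ G z.fst).comp (ContinuousLinearMap.fst ℝ E F)
            - ContinuousLinearMap.snd ℝ E F))).comp
          ((WithLp.prodContinuousLinearEquiv 2 ℝ E F) :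
            WithLp 2 (E × F) →L[ℝ] (E × F)))) q).fst = q.fst := rfl
  have h4 : ((((WithLp.prodContinuousLinearEquiv 2 ℝ E F).symm :
          (E × F) →L[ℝ] WithLp 2 (E × F)).comp
        ((((ContinuousLinearMap.fst ℝ E F).prod
          ((fderiv ℝ G z.fst).comp (ContinuousLinearMap.fst ℝ E F)
            - ContinuousLinearMap.snd ℝ E F))).comp
          ((WithLp.prodContinuousLinearEquiv 2 ℝ E F) :
            WithLp 2 (E × F) →L[ℝ] (E × F)))) q).snd
      = fderiv ℝ G z.fst q.fst - q.snd := rfl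
  rw [h3, h4]
  rw [inner_add_left, inner_neg_left, inner_sub_right,
    ContinuousLinearMap.adjoint_inner_left]
  ring

theorem shT_continuous (hG : ContDiff ℝ 1 G) : Continuous fun zv : WithLp 2 (E × F) × WithLp 2 (E × F) =>
    shT G zv.1 zv.2 := by
  have h1 : Continuous fun zv : WithLp 2 (E × F) × WithLp 2 (E × F) =>
      zv.2.fst + ContinuousLinearMap.adjoint (fderiv ℝ G zv.1.fst) zv.2.snd := by
    apply Continuous.add
    · exact continuous_pl2_fst.comp continuous_snd
    · apply Continuous.clm_apply
      · exact (ContinuousLinearMap.adjoint.continuous).comp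
          ((hG.continuous_fderiv one_ne_zero).comp (continuous_pl2_fst.comp continuous_fst))
      · exact continuous_pl2_snd.comp continuous_snd
  have h2 : Continuous fun zv : WithLp 2 (E × F) × WithLp 2 (E × F) =>
      -zv.2.snd := (continuous_pl2_snd.comp continuous_snd).neg
  have := continuous_pl2.comp (h1.prodMk h2)
  exact this

end Shear

section Formula
variable {E F : Type*} [NormedAddCommGroup E] [InnerProductSpace ℝ E]
  [NormedAddCommGroup F] [InnerProductSpace ℝ F] [CompleteSpace E] [CompleteSpace F]

theorem Mmap_formula (G : E → F) (hG : ContDiff ℝ 1 G) (K : Set F)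
    (Φ : E → Set F) (hΦ : ∀ x, Φ x = {w | G x - w ∈ K}) (x : E) (y : F) :
    Mmap Φ x y = {v | ∃ μ ∈ limitingNC K (G x - y),
      v = ContinuousLinearMap.adjoint (fderiv ℝ G x) μ} := by
  set S : Set (WithLp 2 (E × F)) := {q : WithLp 2 (E × F) | q.snd ∈ K} with hSdef
  have hmap1 : ∀ p ∈ svGraph Φ, sh G p ∈ S := by
    intro p hp
    have : (WithLp.equiv 2 (E × F) p).2 ∈ Φ (WithLp.equiv 2 (E × F) p).1 := hp
    rw [hΦ] at this
    exact this
  have hmap2 : ∀ p ∈ S, sh G p ∈ svGraph Φ := by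
    intro p hp
    show (WithLp.equiv 2 (E × F) (sh G p)).2 ∈ Φ (WithLp.equiv 2 (E × F) (sh G p)).1
    rw [hΦ]
    show G p.fst - (G p.fst - p.snd) ∈ K
    rw [sub_sub_cancel]
    exact hp
  ext v
  constructor
  · intro hv
    obtain ⟨l, hl⟩ := Set.mem_iUnion.1 hv
    have hshz : sh G (pl2 x (G x - y)) = pl2 x y := by
      show pl2 x (G x - (G x - y)) = pl2 x y
      rw [sub_sub_cancel]
    have hl' : (pl2 v (-l) : WithLp 2 (E × F)) ∈ limitingNC (svGraph Φ) (pl2 x y) := hl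
    rw [← hshz] at hl'
    have key := limiting_pullback hmap2 hmap1 (sh_invol G) (sh_contDiff G hG)
      (shT G) (shT_adjoint G hG) (shT_continuous G hG) hl'
    rw [shT_apply] at key
    have hch := limiting_prod.1 key
    have hfst : v + ContinuousLinearMap.adjoint (fderiv ℝ G x) (-l) = 0 := hch.1
    have hsnd' : -(-l) ∈ limitingNC K (G x - y) := hch.2
    rw [neg_neg] at hsnd'
    have hsnd : l ∈ limitingNC K (G x - y) := hsnd'
    refine ⟨l, hsnd, ?_⟩
    rw [map_neg] at hfst
    have h2 : v - ContinuousLinearMap.adjoint (fderiv ℝ G x) l = 0 := by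
      rw [sub_eq_add_neg]; exact hfst
    exact eq_of_sub_eq_zero h2
  · rintro ⟨μ, hμ, rfl⟩
    have hw : (pl2 (0:E) μ : WithLp 2 (E × F)) ∈ limitingNC S (pl2 x (G x - y)) :=
      limiting_prod.2 ⟨rfl, hμ⟩
    have hshz : sh G (pl2 x y) = pl2 x (G x - y) := rfl
    rw [← hshz] at hw
    have key := limiting_pullback hmap1 hmap2 (sh_invol G) (sh_contDiff G hG)
      (shT G) (shT_adjoint G hG) (shT_continuous G hG) hw
    have heq : shT G (pl2 x y) (pl2 (0:E) μ)
        = pl2 (ContinuousLinearMap.adjoint (fderiv ℝ G x) μ) (-μ) := by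
      rw [shT_apply]
      show pl2 ((0:E) + ContinuousLinearMap.adjoint (fderiv ℝ G x) μ) (-μ) = _
      rw [zero_add]
    rw [heq] at key
    exact Set.mem_iUnion.2 ⟨μ, key⟩

end Formula

theorem AM_regularity_for_disjunctive_programs (n m : ℕ)
    (G : EuclideanSpace ℝ (Fin n) → EuclideanSpace ℝ (Fin m)) (hG : ContDiff ℝ 1 G)
    (p : ℕ) (D : Fin p → Set (EuclideanSpace ℝ (Fin m))) (hD : ∀ i, IsPolyhedralSet (D i))
    (K : Set (EuclideanSpace ℝ (Fin m))) (hK : K = ⋃ i, D i)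
    (xb : EuclideanSpace ℝ (Fin n)) (hfeas : G xb ∈ K)
    (Φ : EuclideanSpace ℝ (Fin n) → Set (EuclideanSpace ℝ (Fin m)))
    (hΦ : ∀ x, Φ x = {w | G x - w ∈ K})
    (𝒦 : EuclideanSpace ℝ (Fin n) → Set (EuclideanSpace ℝ (Fin n)))
    (h𝒦 : ∀ x, 𝒦 x = {v | ∃ lam ∈ limitingNC K (G xb),
      v = ContinuousLinearMap.adjoint (fderiv ℝ G x) lam}) :
    AMregular Φ xb ↔
      {v : EuclideanSpace ℝ (Fin n) |
        ∃ (xk vk : ℕ → EuclideanSpace ℝ (Fin n)), Tendsto xk atTop (𝓝 xb) ∧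
          Tendsto vk atTop (𝓝 v) ∧ ∀ k, vk k ∈ 𝒦 (xk k)} ⊆ 𝒦 xb := by
  have hMx : ∀ x y, Mmap Φ x y = {v | ∃ μ ∈ limitingNC K (G x - y),
      v = ContinuousLinearMap.adjoint (fderiv ℝ G x) μ} := Mmap_formula G hG K Φ hΦ
  constructor
  · intro hAM v hv
    obtain ⟨xk, vk, hxk, hvk, hmem⟩ := hv
    have hmem' : ∀ k, ∃ lam ∈ limitingNC K (G xb),
        vk k = ContinuousLinearMap.adjoint (fderiv ℝ G (xk k)) lam := by
      intro k; have := hmem k; rwa [h𝒦] at this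
    choose lam hlam1 hlam2 using hmem'
    have hyk : Tendsto (fun k => G (xk k) - G xb) atTop (𝓝 0) := by
      have := ((hG.continuous.tendsto xb).comp hxk).sub_const (G xb)
      simpa using this
    have hvmem : ∀ k, vk k ∈ Mmap Φ (xk k) (G (xk k) - G xb) := by
      intro k
      rw [hMx]
      refine ⟨lam k, ?_, hlam2 k⟩
      have h1 : G (xk k) - (G (xk k) - G xb) = G xb := by abel
      rw [h1]; exact hlam1 k
    have hvM : v ∈ MmapLimsup Φ xb :=
      ⟨xk, vk, fun k => G (xk k) - G xb, hxk, hyk, hvk, hvmem⟩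
    have hvm := hAM hvM
    rw [hMx] at hvm
    obtain ⟨μ, hμ, hveq⟩ := hvm
    rw [h𝒦]
    refine ⟨μ, ?_, hveq⟩
    rwa [sub_zero] at hμ
  · intro hcond v hv
    obtain ⟨xk, vsk, yk, hxk, hyk, hvsk, hmem⟩ := hv
    have hmem' : ∀ k, ∃ μ ∈ limitingNC K (G (xk k) - yk k),
        vsk k = ContinuousLinearMap.adjoint (fderiv ℝ G (xk k)) μ := by
      intro k; have := hmem k; rwa [hMx] at this
    choose μ hμ1 hμ2 using hmem'
    obtain ⟨ε, hε, hloc⟩ := poly_localize hD hK hfeas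
    have hu : Tendsto (fun k => G (xk k) - yk k) atTop (𝓝 (G xb)) := by
      have := ((hG.continuous.tendsto xb).comp hxk).sub hyk
      simpa using this
    have hev : ∀ᶠ k in atTop, (G (xk k) - yk k) ∈ Metric.ball (G xb) ε :=
      hu.eventually (Metric.ball_mem_nhds _ hε)
    obtain ⟨N, hN⟩ := eventually_atTop.1 hev
    have hvK : v ∈ {v : EuclideanSpace ℝ (Fin n) |
        ∃ (xk vk : ℕ → EuclideanSpace ℝ (Fin n)), Tendsto xk atTop (𝓝 xb) ∧
          Tendsto vk atTop (𝓝 v) ∧ ∀ k, vk k ∈ 𝒦 (xk k)} := by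
      refine ⟨fun k => xk (k+N), fun k => vsk (k+N),
        hxk.comp (tendsto_add_atTop_nat N), hvsk.comp (tendsto_add_atTop_nat N),
        fun k => ?_⟩
      rw [h𝒦]
      refine ⟨μ (k+N), ?_, hμ2 (k+N)⟩
      exact hloc _ (Metric.mem_ball.1 (hN (k+N) (Nat.le_add_left _ _))) (hμ1 (k+N))
    have hvb := hcond hvK
    rw [h𝒦] at hvb
    obtain ⟨lam, hlam, hveq⟩ := hvb
    show v ∈ Mmap Φ xb 0
    rw [hMx]
    exact ⟨lam, by rwa [sub_zero], hveq⟩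
end
end

section
/- Let K, C ⊆ ℝⁿ be closed sets and let x̄ ∈ K ∩ C. Suppose the asymptotic stability condition Limsup_{x→x̄, x'→x̄} (N_K(x) + N_C(x')) ⊆ N_K(x̄) + N_C(x̄) holds, i.e., whenever x_k → x̄, x'_k → x̄, and v_k → v with v_k ∈ N_K(x_k) + N_C(x'_k) for all k, then v ∈ N_K(x̄) + N_C(x̄). Then N_{K∩C}(x̄) ⊆ N_K(x̄) + N_C(x̄). -/
open Filter Topology RealInnerProductSpace
open scoped ENNReal NNReal

noncomputable section

section Aux
variable {E : Type*} [NormedAddCommGroup E] [InnerProductSpace ℝ E]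

theorem mem_frechet_of_quad {A : Set E} {x u : E} (hx : x ∈ A) {c δ0 : ℝ} (hc : 0 ≤ c)
    (hδ0 : 0 < δ0) (H : ∀ y ∈ A, ‖y - x‖ < δ0 → ⟪u, y - x⟫ ≤ c * ‖y - x‖ ^ 2) :
    u ∈ frechetNC A x := by
  refine ⟨hx, fun ε hε => ⟨min δ0 (ε / (c + 1)), lt_min hδ0 (by positivity), fun y hy hyd => ?_⟩⟩
  have h1 : ‖y - x‖ < δ0 := lt_of_lt_of_le hyd (min_le_left _ _)
  have h2 : ‖y - x‖ ≤ ε / (c + 1) := le_of_lt (lt_of_lt_of_le hyd (min_le_right _ _))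
  have := H y hy h1
  have hn : (0:ℝ) ≤ ‖y - x‖ := norm_nonneg _
  calc ⟪u, y - x⟫ ≤ c * ‖y - x‖ ^ 2 := this
    _ = (c * ‖y - x‖) * ‖y - x‖ := by ring
    _ ≤ ε * ‖y - x‖ := by
        apply mul_le_mul_of_nonneg_right _ hn
        calc c * ‖y - x‖ ≤ (c+1) * (ε / (c + 1)) := by
              apply mul_le_mul (by linarith) h2 hn (by linarith)
          _ = ε := by field_simp

theorem norm_sq_diff (a b : E) : ‖a‖^2 - ‖b‖^2 = 2 * ⟪a - b, b⟫ + ‖a - b‖^2 := by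
  have := norm_add_sq_real (a - b) b
  simp at this
  linarith

theorem sqrtdiff (A B : ℝ) (hA : 0 ≤ A) (hB : 0 < B) :
    Real.sqrt A - Real.sqrt B ≤ (A - B) / (2 * Real.sqrt B) := by
  have hsB : 0 < Real.sqrt B := Real.sqrt_pos.mpr hB
  rw [le_div_iff₀ (by positivity)]
  nlinarith [Real.sq_sqrt hA, Real.sq_sqrt hB.le, sq_nonneg (Real.sqrt A - Real.sqrt B),
    Real.sqrt_nonneg A]

theorem Kside {K : Set E} {xc v Y Z : E} {ε₀ θ ρ R : ℝ} (hε₀ : 0 < ε₀) (hθ : 0 < θ) (hR : 0 < R)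
    (hYK : Y ∈ K) (hYB : ‖Y - xc‖ < ρ)
    (hkey : ∀ yy ∈ K, ‖yy - xc‖ ≤ ρ →
      ⟪v, yy - xc⟫ - 2*ε₀*Real.sqrt (‖yy - xc‖^2 + θ^2) - R*‖yy - Z‖^2 ≤
      ⟪v, Y - xc⟫ - 2*ε₀*Real.sqrt (‖Y - xc‖^2 + θ^2) - R*‖Y - Z‖^2) :
    v - ((2*ε₀)/Real.sqrt (‖Y - xc‖^2 + θ^2)) • (Y - xc) - (2*R) • (Y - Z) ∈ frechetNC K Y := by
  set sY : ℝ := Real.sqrt (‖Y - xc‖^2 + θ^2) with hsYdef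
  have hsYpos : 0 < sY := Real.sqrt_pos.mpr (by positivity)
  have hsYθ : θ ≤ sY := by
    rw [hsYdef]
    calc θ = Real.sqrt (θ^2) := (Real.sqrt_sq hθ.le).symm
      _ ≤ _ := Real.sqrt_le_sqrt (by nlinarith [sq_nonneg ‖Y - xc‖])
  apply mem_frechet_of_quad hYK (c := ε₀/θ + R) (by positivity)
    (show (0:ℝ) < ρ - ‖Y - xc‖ by linarith)
  intro yy hyyK hyyd
  have hyyB : ‖yy - xc‖ ≤ ρ := by
    calc ‖yy - xc‖ ≤ ‖yy - Y‖ + ‖Y - xc‖ := norm_sub_le_norm_sub_add_norm_sub _ _ _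
      _ ≤ ρ := by linarith
  have hineq := hkey yy hyyK hyyB
  set q : ℝ := ‖yy - Y‖^2 with hqdef
  have hq0 : 0 ≤ q := sq_nonneg _
  set a : ℝ := ⟪yy - Y, Y - xc⟫ with hadef
  set b : ℝ := ⟪yy - Y, Y - Z⟫ with hbdef
  have k1 : ⟪v, yy - xc⟫ - ⟪v, Y - xc⟫ = ⟪v, yy - Y⟫ := by
    rw [← inner_sub_right]
    congr 1
    abel
  have k2 : Real.sqrt (‖yy - xc‖^2 + θ^2) - sY ≤ (2*a + q)/(2*sY) := by
    have hAB : ‖yy - xc‖^2 - ‖Y - xc‖^2 = 2*a + q := by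
      have := norm_sq_diff (yy - xc) (Y - xc)
      rw [show (yy - xc) - (Y - xc) = yy - Y by abel] at this
      rw [hadef, hqdef]; linarith
    have h2 := sqrtdiff (‖yy - xc‖^2 + θ^2) (‖Y - xc‖^2 + θ^2) (by positivity) (by positivity)
    calc Real.sqrt (‖yy - xc‖^2 + θ^2) - sY
        ≤ (‖yy - xc‖^2 + θ^2 - (‖Y - xc‖^2 + θ^2))/(2*sY) := h2
      _ = (2*a + q)/(2*sY) := by rw [show ‖yy - xc‖^2 + θ^2 - (‖Y - xc‖^2 + θ^2)
            = ‖yy - xc‖^2 - ‖Y - xc‖^2 by ring, hAB]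
  have k3 : ‖yy - Z‖^2 - ‖Y - Z‖^2 = 2*b + q := by
    have := norm_sq_diff (yy - Z) (Y - Z)
    rw [show (yy - Z) - (Y - Z) = yy - Y by abel] at this
    rw [hbdef, hqdef]; linarith
  have k4 : ⟪v - ((2*ε₀)/sY) • (Y - xc) - (2*R) • (Y - Z), yy - Y⟫
      = ⟪v, yy - Y⟫ - ((2*ε₀)/sY) * a - (2*R) * b := by
    rw [inner_sub_left, inner_sub_left, real_inner_smul_left, real_inner_smul_left]
    rw [hadef, hbdef, real_inner_comm (Y - xc), real_inner_comm (Y - Z)]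
  have k5 : ⟪v, yy - Y⟫ ≤ 2 * ε₀ * (Real.sqrt (‖yy - xc‖^2 + θ^2) - sY) + R * (2*b + q) := by
    rw [← k1, ← k3]; nlinarith
  have k6 : 2 * ε₀ * (Real.sqrt (‖yy - xc‖^2 + θ^2) - sY) ≤ (ε₀/sY) * (2*a + q) := by
    have h1 : 2 * ε₀ * ((2*a + q)/(2*sY)) = (ε₀/sY) * (2*a + q) := by
      field_simp
    calc 2 * ε₀ * (Real.sqrt (‖yy - xc‖^2 + θ^2) - sY)
        ≤ 2 * ε₀ * ((2*a + q)/(2*sY)) := by nlinarith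
      _ = (ε₀/sY) * (2*a + q) := h1
  set t : ℝ := ε₀/sY with htdef
  have k4' : ⟪v - ((2*ε₀)/sY) • (Y - xc) - (2*R) • (Y - Z), yy - Y⟫
      = ⟪v, yy - Y⟫ - 2*(t*a) - 2*(R*b) := by rw [k4, htdef]; ring
  have k6' : 2 * ε₀ * (Real.sqrt (‖yy - xc‖^2 + θ^2) - sY) ≤ 2*(t*a) + t*q := by
    have h1 : t*(2*a+q) = 2*(t*a) + t*q := by ring
    linarith
  have k5' : ⟪v, yy - Y⟫ ≤ 2 * ε₀ * (Real.sqrt (‖yy - xc‖^2 + θ^2) - sY) + 2*(R*b) + R*q := by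
    have h1 : R*(2*b+q) = 2*(R*b) + R*q := by ring
    linarith
  have k7 : ⟪v - ((2*ε₀)/sY) • (Y - xc) - (2*R) • (Y - Z), yy - Y⟫ ≤ t * q + R * q := by
    rw [k4']
    linarith
  have k8 : t ≤ ε₀/θ := by rw [htdef]; gcongr
  have k9 : t * q ≤ (ε₀/θ) * q := mul_le_mul_of_nonneg_right k8 hq0
  calc ⟪v - ((2*ε₀)/sY) • (Y - xc) - (2*R) • (Y - Z), yy - Y⟫
      ≤ t * q + R * q := k7
    _ ≤ (ε₀/θ + R) * ‖yy - Y‖^2 := by rw [← hqdef]; linarith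

theorem Cside {C : Set E} {xc Y Z : E} {ρ R : ℝ} (hR : 0 < R)
    (hZC : Z ∈ C) (hZB : ‖Z - xc‖ < ρ)
    (hkey : ∀ zz ∈ C, ‖zz - xc‖ ≤ ρ → R*‖Y - Z‖^2 ≤ R*‖Y - zz‖^2) :
    (2*R) • (Y - Z) ∈ frechetNC C Z := by
  apply mem_frechet_of_quad hZC (c := R) hR.le (show (0:ℝ) < ρ - ‖Z - xc‖ by linarith)
  intro zz hzzC hzzd
  have hzzB : ‖zz - xc‖ ≤ ρ := by
    calc ‖zz - xc‖ ≤ ‖zz - Z‖ + ‖Z - xc‖ := norm_sub_le_norm_sub_add_norm_sub _ _ _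
      _ ≤ ρ := by linarith
  have hineq := hkey zz hzzC hzzB
  have k3 : ‖Y - zz‖^2 - ‖Y - Z‖^2 = -2*⟪zz - Z, Y - Z⟫ + ‖zz - Z‖^2 := by
    have h1 := norm_sq_diff (Y - zz) (Y - Z)
    rw [show (Y - zz) - (Y - Z) = -(zz - Z) by abel] at h1
    rw [inner_neg_left, norm_neg] at h1
    linarith
  have k4 : ⟪(2*R) • (Y - Z), zz - Z⟫ = (2*R) * ⟪zz - Z, Y - Z⟫ := by
    rw [real_inner_smul_left, real_inner_comm]
  rw [k4]
  nlinarith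

theorem uwv (v g d : E) (c e : ℝ) : (v - c • g - e • d) + e • d - v = -(c • g) := by abel


theorem uw_norm_bound (v Y xc Z : E) (R : ℝ) {ε₀ θ : ℝ} (hε₀ : 0 < ε₀) (hθ : 0 < θ) :
    ‖v - ((2*ε₀)/Real.sqrt (‖Y - xc‖^2 + θ^2)) • (Y - xc) - (2*R) • (Y - Z)
      + (2*R) • (Y - Z) - v‖ ≤ 2*ε₀ := by
  have hsYpos : (0:ℝ) < Real.sqrt (‖Y - xc‖^2 + θ^2) := Real.sqrt_pos.mpr (by positivity)
  have hYle : ‖Y - xc‖ ≤ Real.sqrt (‖Y - xc‖^2 + θ^2) := by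
    calc ‖Y - xc‖ = Real.sqrt (‖Y - xc‖^2) := (Real.sqrt_sq (norm_nonneg _)).symm
      _ ≤ _ := Real.sqrt_le_sqrt (by nlinarith)
  rw [uwv, norm_neg, norm_smul, Real.norm_eq_abs, abs_of_nonneg (by positivity)]
  calc (2*ε₀)/Real.sqrt (‖Y - xc‖^2 + θ^2) * ‖Y - xc‖
      ≤ (2*ε₀)/Real.sqrt (‖Y - xc‖^2 + θ^2) * Real.sqrt (‖Y - xc‖^2 + θ^2) := by gcongr
    _ = 2*ε₀ := by field_simp

theorem frechet_subset_limiting (A : Set E) (x : E) : frechetNC A x ⊆ limitingNC A x :=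
  fun v hv => ⟨fun _ => x, fun _ => v, fun _ => hv.1, tendsto_const_nhds, fun _ => hv, tendsto_const_nhds⟩
end Aux


theorem fuzzy {n : ℕ} {K C : Set (EuclideanSpace ℝ (Fin n))} (hK : IsClosed K) (hC : IsClosed C)
    {xc v : EuclideanSpace ℝ (Fin n)} (hv : v ∈ frechetNC (K ∩ C) xc)
    {ε : ℝ} (hε : 0 < ε) :
    ∃ y z u w, y ∈ K ∧ z ∈ C ∧ ‖y - xc‖ < ε ∧ ‖z - xc‖ < ε ∧
      u ∈ frechetNC K y ∧ w ∈ frechetNC C z ∧ ‖u + w - v‖ ≤ ε := by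
  classical
  obtain ⟨hxc, hfre⟩ := hv
  have hxK : xc ∈ K := hxc.1
  have hxC : xc ∈ C := hxc.2
  set ε₀ : ℝ := ε / 2 with hε₀def
  have hε₀ : 0 < ε₀ := by positivity
  obtain ⟨δ, hδ, hδp⟩ := hfre ε₀ hε₀
  set ρ : ℝ := min ε δ / 2 with hρdef
  have hρ : 0 < ρ := by positivity
  have hρε : ρ < ε := by
    have : min ε δ ≤ ε := min_le_left _ _
    simp only [hρdef]; linarith
  have hρδ : ρ < δ := by
    have : min ε δ ≤ δ := min_le_right _ _
    simp only [hρdef]; linarith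
  set θ : ℝ := ρ / 4 with hθdef
  have hθ : 0 < θ := by positivity
  set s : EuclideanSpace ℝ (Fin n) → ℝ := fun y => Real.sqrt (‖y - xc‖^2 + θ^2) with hsdef
  have hs_pos : ∀ y : EuclideanSpace ℝ (Fin n), 0 < s y :=
    fun y => Real.sqrt_pos.mpr (by positivity)
  have hs_ge_norm : ∀ y : EuclideanSpace ℝ (Fin n), ‖y - xc‖ ≤ s y := fun y => by
    rw [hsdef]
    calc ‖y - xc‖ = Real.sqrt (‖y - xc‖^2) := (Real.sqrt_sq (norm_nonneg _)).symm
      _ ≤ _ := Real.sqrt_le_sqrt (by nlinarith)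
  have hsxc : s xc = θ := by
    simp only [hsdef, sub_self, norm_zero]
    rw [show (0:ℝ)^2 + θ^2 = θ^2 by ring, Real.sqrt_sq hθ.le]
  set G : ℕ → EuclideanSpace ℝ (Fin n) × EuclideanSpace ℝ (Fin n) → ℝ := fun r p =>
    ⟪v, p.1 - xc⟫ - 2 * ε₀ * s p.1 - ((r:ℝ)+1) * ‖p.1 - p.2‖^2 with hGdef
  set D : Set (EuclideanSpace ℝ (Fin n) × EuclideanSpace ℝ (Fin n)) :=
    (K ∩ Metric.closedBall xc ρ) ×ˢ (C ∩ Metric.closedBall xc ρ) with hDdef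
  have hDcomp : IsCompact D := by
    apply IsCompact.prod
    · exact (isCompact_closedBall xc ρ).inter_left hK
    · exact (isCompact_closedBall xc ρ).inter_left hC
  have hxcD : (xc, xc) ∈ D := ⟨⟨hxK, Metric.mem_closedBall_self hρ.le⟩,
    ⟨hxC, Metric.mem_closedBall_self hρ.le⟩⟩
  have hDne : D.Nonempty := ⟨(xc, xc), hxcD⟩
  have hGcont : ∀ r, ContinuousOn (G r) D := by
    intro r
    apply Continuous.continuousOn
    apply Continuous.sub
    apply Continuous.sub
    · exact continuous_const.inner (continuous_fst.sub continuous_const)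
    · exact continuous_const.mul ((((continuous_fst.sub continuous_const).norm.pow 2).add
        continuous_const).sqrt)
    · exact continuous_const.mul ((continuous_fst.sub continuous_snd).norm.pow 2)
  have hmaxex : ∀ r : ℕ, ∃ p ∈ D, IsMaxOn (G r) D p := fun r =>
    hDcomp.exists_isMaxOn hDne (hGcont r)
  choose p hpD hpmax using hmaxex
  set y : ℕ → EuclideanSpace ℝ (Fin n) := fun r => (p r).1 with hydef
  set z : ℕ → EuclideanSpace ℝ (Fin n) := fun r => (p r).2 with hzdef
  have hyK : ∀ r, y r ∈ K := fun r => (hpD r).1.1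
  have hyB : ∀ r, ‖y r - xc‖ ≤ ρ := fun r => by
    have := (hpD r).1.2; rwa [Metric.mem_closedBall, dist_eq_norm] at this
  have hzC : ∀ r, z r ∈ C := fun r => (hpD r).2.1
  have hzB : ∀ r, ‖z r - xc‖ ≤ ρ := fun r => by
    have := (hpD r).2.2; rwa [Metric.mem_closedBall, dist_eq_norm] at this
  have hGxc : ∀ r : ℕ, G r (xc, xc) = -2 * ε₀ * θ := by
    intro r
    simp only [hGdef, hsxc, sub_self, inner_zero_right, norm_zero]
    ring
  have hlow : ∀ r : ℕ, -2 * ε₀ * θ ≤ G r (p r) := by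
    intro r
    rw [← hGxc r]
    exact hpmax r hxcD
  set M : ℝ := ‖v‖ * ρ + 2 * ε₀ * θ with hMdef
  have hM : 0 ≤ M := by positivity
  have hpen : ∀ r : ℕ, ((r:ℝ)+1) * ‖y r - z r‖^2 ≤ M := by
    intro r
    have h1 := hlow r
    have h2 : ⟪v, y r - xc⟫ ≤ ‖v‖ * ρ := by
      calc ⟪v, y r - xc⟫ ≤ ‖v‖ * ‖y r - xc‖ := real_inner_le_norm _ _
        _ ≤ ‖v‖ * ρ := mul_le_mul_of_nonneg_left (hyB r) (norm_nonneg v)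
    have h3 : 0 ≤ s (y r) := (hs_pos _).le
    have h4 : G r (p r) = ⟪v, y r - xc⟫ - 2 * ε₀ * s (y r) - ((r:ℝ)+1) * ‖y r - z r‖^2 := rfl
    rw [h4] at h1
    nlinarith
  have hdz : Tendsto (fun r => y r - z r) atTop (𝓝 0) := by
    apply squeeze_zero_norm (a := fun r : ℕ => Real.sqrt (M * (1/((r:ℝ)+1))))
    · intro r
      have h1 : ‖y r - z r‖^2 ≤ M * (1/((r:ℝ)+1)) := by
        have hr : (0:ℝ) < (r:ℝ)+1 := by positivity
        rw [mul_one_div, le_div_iff₀ hr]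
        calc ‖y r - z r‖^2 * ((r:ℝ)+1) = ((r:ℝ)+1) * ‖y r - z r‖^2 := by ring
          _ ≤ M := hpen r
      calc ‖y r - z r‖ = Real.sqrt (‖y r - z r‖^2) := (Real.sqrt_sq (norm_nonneg _)).symm
        _ ≤ _ := Real.sqrt_le_sqrt h1
    · have h0 : Tendsto (fun r : ℕ => M * (1/((r:ℝ)+1))) atTop (𝓝 0) := by
        have := tendsto_one_div_add_atTop_nhds_zero_nat.const_mul M
        simpa using this
      have := (Real.continuous_sqrt.tendsto 0).comp h0
      simpa [Function.comp_def] using this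
  obtain ⟨pb, hpbD, φ, hφmono, hφconv⟩ := hDcomp.tendsto_subseq hpD
  have hyconv : Tendsto (fun j => y (φ j)) atTop (𝓝 pb.1) :=
    (continuous_fst.tendsto pb).comp hφconv
  have hzconv : Tendsto (fun j => z (φ j)) atTop (𝓝 pb.2) :=
    (continuous_snd.tendsto pb).comp hφconv
  have hpb_eq : pb.1 = pb.2 := by
    have h1 : Tendsto (fun j => y (φ j) - z (φ j)) atTop (𝓝 (pb.1 - pb.2)) := hyconv.sub hzconv
    have h2 : Tendsto (fun j => y (φ j) - z (φ j)) atTop (𝓝 0) := hdz.comp hφmono.tendsto_atTop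
    exact sub_eq_zero.mp (tendsto_nhds_unique h1 h2)
  have hscont : Continuous s := by
    apply Continuous.sqrt
    exact ((continuous_id.sub continuous_const).norm.pow 2).add continuous_const
  have hvallim : -2 * ε₀ * θ ≤ ⟪v, pb.1 - xc⟫ - 2 * ε₀ * s pb.1 := by
    have htends : Tendsto (fun j => ⟪v, y (φ j) - xc⟫ - 2 * ε₀ * s (y (φ j))) atTop
        (𝓝 (⟪v, pb.1 - xc⟫ - 2 * ε₀ * s pb.1)) := by
      apply Tendsto.sub
      · exact (tendsto_const_nhds.inner (hyconv.sub tendsto_const_nhds))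
      · exact tendsto_const_nhds.mul ((hscont.tendsto pb.1).comp hyconv)
    apply ge_of_tendsto' htends
    intro j
    have h1 := hlow (φ j)
    have h4 : G (φ j) (p (φ j)) = ⟪v, y (φ j) - xc⟫ - 2 * ε₀ * s (y (φ j))
        - (((φ j):ℝ)+1) * ‖y (φ j) - z (φ j)‖^2 := rfl
    rw [h4] at h1
    nlinarith [mul_nonneg (by positivity : (0:ℝ) ≤ ((φ j:ℝ)+1)) (sq_nonneg ‖y (φ j) - z (φ j)‖)]
  have hpbKC : pb.1 ∈ K ∩ C := ⟨hpbD.1.1, hpb_eq ▸ hpbD.2.1⟩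
  have hpbB : ‖pb.1 - xc‖ ≤ ρ := by
    have := hpbD.1.2; rwa [Metric.mem_closedBall, dist_eq_norm] at this
  have hpbsmall : ‖pb.1 - xc‖ ≤ 2 * θ := by
    have hfr : ⟪v, pb.1 - xc⟫ ≤ ε₀ * ‖pb.1 - xc‖ := hδp pb.1 hpbKC (lt_of_le_of_lt hpbB hρδ)
    have hge := hs_ge_norm pb.1
    nlinarith
  have hpb2small : ‖pb.2 - xc‖ ≤ 2 * θ := hpb_eq ▸ hpbsmall
  obtain ⟨N1, hN1⟩ := Metric.tendsto_atTop.mp hyconv θ hθ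
  obtain ⟨N2, hN2⟩ := Metric.tendsto_atTop.mp hzconv θ hθ
  set j := max N1 N2 with hjdef
  set r := φ j with hrdef
  set Y := y r with hYdef
  set Z := z r with hZdef
  have hYnear : ‖Y - pb.1‖ < θ := by
    have := hN1 j (le_max_left _ _); rwa [dist_eq_norm] at this
  have hZnear : ‖Z - pb.2‖ < θ := by
    have := hN2 j (le_max_right _ _); rwa [dist_eq_norm] at this
  have hθρ : 4 * θ = ρ := by rw [hθdef]; ring
  have hYB : ‖Y - xc‖ < ρ := by
    calc ‖Y - xc‖ ≤ ‖Y - pb.1‖ + ‖pb.1 - xc‖ := norm_sub_le_norm_sub_add_norm_sub _ _ _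
      _ < θ + 2 * θ := by linarith
      _ < ρ := by linarith
  have hZB : ‖Z - xc‖ < ρ := by
    calc ‖Z - xc‖ ≤ ‖Z - pb.2‖ + ‖pb.2 - xc‖ := norm_sub_le_norm_sub_add_norm_sub _ _ _
      _ < θ + 2 * θ := by linarith
      _ < ρ := by linarith
  set R : ℝ := (r:ℝ) + 1 with hRdef
  have hR : 0 < R := by positivity
  have hmaxr : ∀ q ∈ D, G r q ≤ G r (Y, Z) := fun q hq => hpmax r hq
  have hkey1 : ∀ yy ∈ K, ‖yy - xc‖ ≤ ρ →
      ⟪v, yy - xc⟫ - 2*ε₀*Real.sqrt (‖yy - xc‖^2 + θ^2) - R*‖yy - Z‖^2 ≤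
      ⟪v, Y - xc⟫ - 2*ε₀*Real.sqrt (‖Y - xc‖^2 + θ^2) - R*‖Y - Z‖^2 := by
    intro yy h1 h2
    exact hmaxr (yy, Z) ⟨⟨h1, by rw [Metric.mem_closedBall, dist_eq_norm]; exact h2⟩,
      ⟨hzC r, by rw [Metric.mem_closedBall, dist_eq_norm]; exact hZB.le⟩⟩
  have hkey2 : ∀ zz ∈ C, ‖zz - xc‖ ≤ ρ → R*‖Y - Z‖^2 ≤ R*‖Y - zz‖^2 := by
    intro zz h1 h2
    have h0 : ⟪v, Y - xc⟫ - 2*ε₀* s Y - R*‖Y - zz‖^2 ≤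
        ⟪v, Y - xc⟫ - 2*ε₀* s Y - R*‖Y - Z‖^2 :=
      hmaxr (Y, zz) ⟨⟨hyK r, by rw [Metric.mem_closedBall, dist_eq_norm]; exact hYB.le⟩,
        ⟨h1, by rw [Metric.mem_closedBall, dist_eq_norm]; exact h2⟩⟩
    linarith
  refine ⟨Y, Z, v - ((2*ε₀)/Real.sqrt (‖Y - xc‖^2 + θ^2)) • (Y - xc) - (2*R) • (Y - Z),
    (2*R) • (Y - Z), hyK r, hzC r, hYB.trans_le hρε.le, hZB.trans_le hρε.le,
    Kside hε₀ hθ hR (hyK r) hYB hkey1, Cside hR (hzC r) hZB hkey2, ?_⟩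
  exact (uw_norm_bound v Y xc Z R hε₀ hθ).trans_eq (by rw [hε₀def]; ring)


open scoped Pointwise in

theorem normal_cone_intersection_rule (n : ℕ)
    (K C : Set (EuclideanSpace ℝ (Fin n))) (hK : IsClosed K) (hC : IsClosed C)
    (xb : EuclideanSpace ℝ (Fin n)) (hx : xb ∈ K ∩ C)
    (h : ∀ (xk x'k vk : ℕ → EuclideanSpace ℝ (Fin n)) (v : EuclideanSpace ℝ (Fin n)),
      Tendsto xk atTop (𝓝 xb) → Tendsto x'k atTop (𝓝 xb) → Tendsto vk atTop (𝓝 v) →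
      (∀ k, vk k ∈ limitingNC K (xk k) + limitingNC C (x'k k)) →
      v ∈ limitingNC K xb + limitingNC C xb) :
    limitingNC (K ∩ C) xb ⊆ limitingNC K xb + limitingNC C xb := by
  intro v hv
  obtain ⟨xk, vk, hxkmem, hxk, hvk, hvconv⟩ := hv
  have hfz : ∀ k : ℕ, ∃ y z u w, y ∈ K ∧ z ∈ C ∧ ‖y - xk k‖ < 1/((k:ℝ)+1) ∧
      ‖z - xk k‖ < 1/((k:ℝ)+1) ∧ u ∈ frechetNC K y ∧ w ∈ frechetNC C z ∧
      ‖u + w - vk k‖ ≤ 1/((k:ℝ)+1) := fun k => fuzzy hK hC (hvk k) (by positivity)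
  choose y z u w hyK hzC hyd hzd hu hw hn using hfz
  apply h y z (fun k => u k + w k) v
  · have h1 : Tendsto (fun k => y k - xk k) atTop (𝓝 0) :=
      squeeze_zero_norm (fun k => (hyd k).le) tendsto_one_div_add_atTop_nhds_zero_nat
    have := h1.add hxk
    simpa using this
  · have h1 : Tendsto (fun k => z k - xk k) atTop (𝓝 0) :=
      squeeze_zero_norm (fun k => (hzd k).le) tendsto_one_div_add_atTop_nhds_zero_nat
    have := h1.add hxk
    simpa using this
  · have h1 : Tendsto (fun k => (u k + w k) - vk k) atTop (𝓝 0) :=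
      squeeze_zero_norm (fun k => hn k) tendsto_one_div_add_atTop_nhds_zero_nat
    have := h1.add hvconv
    simpa using this
  · intro k
    exact Set.add_mem_add (frechet_subset_limiting _ _ (hu k)) (frechet_subset_limiting _ _ (hw k))
end
end
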